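/- Let (Ω, 𝔐, μ) be a probability space, let (ωₙ)_{n≥1} be the coordinate process on the infinite product space (Ω^ℕ, μ^ℕ) (i.i.d. with law μ), and let f, g : Ω → 3 = {0,1,⊥} be measurable. Then the stochastic processes (f(ωₙ))_{n≥1} and (g(ωₙ))_{n≥1} are independent if and only if the following four equalities hold, where an equality is understood to hold also when both sides are undefined (involve division by zero) and to fail when exactly one side is undefined: (1) μ(f=1 ∧ g=1)/μ(f≠⊥ ∧ g≠⊥) = (μ(f=1)/μ(f≠⊥)) · (μ(g=1)/μ(g≠⊥)); (2) μ(f=1 ∧ g≠⊥)/μ(f≠⊥) = (μ(f=1)/μ(f≠⊥)) · μ(g≠⊥); (3) μ(f≠⊥ ∧ g=1)/μ(g≠⊥) = μ(f≠⊥) · (μ(g=1)/μ(g≠⊥)); (4) μ(f≠⊥ ∧ g≠⊥) = μ(f≠⊥) · μ(g≠⊥). -/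

import Mathlib

open MeasureTheory ProbabilityTheory

/-- The three truth values `0`, `1`, `⊥`. -/
inductive Tri : Type
  | zero : Tri
  | one : Tri
  | bot : Tri
deriving DecidableEq

instance : MeasurableSpace Tri := ⊤

/-- An equality between two possibly undefined quotient expressions: it holds when
both sides are defined and equal, or when both sides are undefined; it fails when
exactly one side is undefined. `dl`/`dr` state that the left/right side is defined
and `l`/`r` are the values. -/
def CondEq (dl dr : Prop) (l r : ENNReal) : Prop :=
  (dl ∧ dr ∧ l = r) ∨ (¬dl ∧ ¬dr)

section Aux

variable {Ω : Type*} [MeasurableSpace Ω] {μ : Measure Ω}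

lemma measPre {f : Ω → Tri} (hf : Measurable f) (s : Set Tri) : MeasurableSet (f ⁻¹' s) :=
  hf MeasurableSpace.measurableSet_top

lemma split_zo {h : Ω → Tri} (hh : Measurable h) {p : Ω → Prop}
    (hp : MeasurableSet {x | p x}) :
    μ {x | h x = Tri.zero ∧ p x} + μ {x | h x = Tri.one ∧ p x}
      = μ {x | h x ≠ Tri.bot ∧ p x} := by
  have hu : {x | h x = Tri.zero ∧ p x} ∪ {x | h x = Tri.one ∧ p x}
      = {x | h x ≠ Tri.bot ∧ p x} := by
    ext x; rcases hx : h x <;> simp [hx]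
  have hd : Disjoint {x | h x = Tri.zero ∧ p x} {x | h x = Tri.one ∧ p x} := by
    rw [Set.disjoint_left]; rintro x ⟨h0, -⟩ ⟨h1, -⟩; simp_all
  rw [← hu, measure_union hd ((measPre hh {y | y = Tri.one}).inter hp)]

lemma split_bot {h : Ω → Tri} (hh : Measurable h) {p : Ω → Prop}
    (hp : MeasurableSet {x | p x}) :
    μ {x | h x ≠ Tri.bot ∧ p x} + μ {x | h x = Tri.bot ∧ p x} = μ {x | p x} := by
  have hu : {x | h x ≠ Tri.bot ∧ p x} ∪ {x | h x = Tri.bot ∧ p x} = {x | p x} := by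
    ext x; rcases hx : h x <;> simp [hx]
  have hd : Disjoint {x | h x ≠ Tri.bot ∧ p x} {x | h x = Tri.bot ∧ p x} := by
    rw [Set.disjoint_left]; rintro x ⟨h0, -⟩ ⟨h1, -⟩; simp_all
  rw [← hu, measure_union hd ((measPre hh {y | y = Tri.bot}).inter hp)]

lemma split_zo' {h : Ω → Tri} (hh : Measurable h) {p : Ω → Prop}
    (hp : MeasurableSet {x | p x}) :
    μ {x | p x ∧ h x = Tri.zero} + μ {x | p x ∧ h x = Tri.one}
      = μ {x | p x ∧ h x ≠ Tri.bot} := by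
  have hu : {x | p x ∧ h x = Tri.zero} ∪ {x | p x ∧ h x = Tri.one}
      = {x | p x ∧ h x ≠ Tri.bot} := by
    ext x; rcases hx : h x <;> simp [hx]
  have hd : Disjoint {x | p x ∧ h x = Tri.zero} {x | p x ∧ h x = Tri.one} := by
    rw [Set.disjoint_left]; rintro x ⟨-, h0⟩ ⟨-, h1⟩; simp_all
  rw [← hu, measure_union hd (hp.inter (measPre hh {y | y = Tri.one}))]

lemma split_bot' {h : Ω → Tri} (hh : Measurable h) {p : Ω → Prop}
    (hp : MeasurableSet {x | p x}) :
    μ {x | p x ∧ h x ≠ Tri.bot} + μ {x | p x ∧ h x = Tri.bot} = μ {x | p x} := by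
  have hu : {x | p x ∧ h x ≠ Tri.bot} ∪ {x | p x ∧ h x = Tri.bot} = {x | p x} := by
    ext x; rcases hx : h x <;> simp [hx]
  have hd : Disjoint {x | p x ∧ h x ≠ Tri.bot} {x | p x ∧ h x = Tri.bot} := by
    rw [Set.disjoint_left]; rintro x ⟨-, h0⟩ ⟨-, h1⟩; simp_all
  rw [← hu, measure_union hd (hp.inter (measPre hh {y | y = Tri.bot}))]

lemma marg_zo {h : Ω → Tri} (hh : Measurable h) :
    μ {x | h x = Tri.zero} + μ {x | h x = Tri.one} = μ {x | h x ≠ Tri.bot} := by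
  have hu : {x | h x = Tri.zero} ∪ {x | h x = Tri.one} = {x | h x ≠ Tri.bot} := by
    ext x; rcases hx : h x <;> simp [hx]
  have hd : Disjoint {x | h x = Tri.zero} {x | h x = Tri.one} := by
    rw [Set.disjoint_left]; intro x h0 h1; simp_all
  rw [← hu, measure_union hd (measPre hh {y | y = Tri.one})]

lemma marg_bot [IsProbabilityMeasure μ] {h : Ω → Tri} (hh : Measurable h) :
    μ {x | h x ≠ Tri.bot} + μ {x | h x = Tri.bot} = 1 := by
  have hu : {x | h x ≠ Tri.bot} ∪ {x | h x = Tri.bot} = Set.univ := by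
    ext x; rcases hx : h x <;> simp [hx]
  have hd : Disjoint {x | h x ≠ Tri.bot} {x | h x = Tri.bot} := by
    rw [Set.disjoint_left]; intro x h0 h1; simp_all
  rw [← measure_univ (μ := μ), ← hu, measure_union hd (measPre hh {y | y = Tri.bot})]

variable [IsProbabilityMeasure μ]

lemma col_lemma {f : Ω → Tri} (hf : Measurable f) {q : Ω → Prop}
    (hq : MeasurableSet {x | q x})
    (h1 : μ {x | f x = Tri.one ∧ q x} = μ {x | f x = Tri.one} * μ {x | q x})
    (hn : μ {x | f x ≠ Tri.bot ∧ q x} = μ {x | f x ≠ Tri.bot} * μ {x | q x}) :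
    μ {x | f x = Tri.zero ∧ q x} = μ {x | f x = Tri.zero} * μ {x | q x} ∧
    μ {x | f x = Tri.bot ∧ q x} = μ {x | f x = Tri.bot} * μ {x | q x} := by
  have hfin : ∀ a b : Set Ω, μ a * μ b ≠ ⊤ :=
    fun a b => ENNReal.mul_ne_top (measure_ne_top _ _) (measure_ne_top _ _)
  constructor
  · have hA := split_zo (μ := μ) hf hq
    rw [h1, hn] at hA
    have hB : μ {x | f x = Tri.zero} * μ {x | q x} + μ {x | f x = Tri.one} * μ {x | q x}
        = μ {x | f x ≠ Tri.bot} * μ {x | q x} := by rw [← add_mul, marg_zo hf]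
    exact (ENNReal.add_left_inj (hfin _ _)).mp (hA.trans hB.symm)
  · have hA := split_bot (μ := μ) hf hq
    rw [hn] at hA
    have hB : μ {x | f x ≠ Tri.bot} * μ {x | q x} + μ {x | f x = Tri.bot} * μ {x | q x}
        = μ {x | q x} := by rw [← add_mul, marg_bot hf, one_mul]
    exact (ENNReal.add_right_inj (hfin _ _)).mp (hA.trans hB.symm)

lemma row_lemma {g : Ω → Tri} (hg : Measurable g) {p : Ω → Prop}
    (hp : MeasurableSet {x | p x})
    (h1 : μ {x | p x ∧ g x = Tri.one} = μ {x | p x} * μ {x | g x = Tri.one})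
    (hn : μ {x | p x ∧ g x ≠ Tri.bot} = μ {x | p x} * μ {x | g x ≠ Tri.bot}) :
    μ {x | p x ∧ g x = Tri.zero} = μ {x | p x} * μ {x | g x = Tri.zero} ∧
    μ {x | p x ∧ g x = Tri.bot} = μ {x | p x} * μ {x | g x = Tri.bot} := by
  have hfin : ∀ a b : Set Ω, μ a * μ b ≠ ⊤ :=
    fun a b => ENNReal.mul_ne_top (measure_ne_top _ _) (measure_ne_top _ _)
  constructor
  · have hA := split_zo' (μ := μ) hg hp
    rw [h1, hn] at hA
    have hB : μ {x | p x} * μ {x | g x = Tri.zero} + μ {x | p x} * μ {x | g x = Tri.one}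
        = μ {x | p x} * μ {x | g x ≠ Tri.bot} := by rw [← mul_add, marg_zo hg]
    exact (ENNReal.add_left_inj (hfin _ _)).mp (hA.trans hB.symm)
  · have hA := split_bot' (μ := μ) hg hp
    rw [hn] at hA
    have hB : μ {x | p x} * μ {x | g x ≠ Tri.bot} + μ {x | p x} * μ {x | g x = Tri.bot}
        = μ {x | p x} := by rw [← mul_add, marg_bot hg, mul_one]
    exact (ENNReal.add_right_inj (hfin _ _)).mp (hA.trans hB.symm)

lemma nine_iff_E {f g : Ω → Tri} (hf : Measurable f) (hg : Measurable g) :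
    (∀ s t : Tri, μ {x | f x = s ∧ g x = t} = μ {x | f x = s} * μ {x | g x = t}) ↔
      (μ {x | f x = Tri.one ∧ g x = Tri.one}
          = μ {x | f x = Tri.one} * μ {x | g x = Tri.one} ∧
        μ {x | f x = Tri.one ∧ g x ≠ Tri.bot}
          = μ {x | f x = Tri.one} * μ {x | g x ≠ Tri.bot} ∧
        μ {x | f x ≠ Tri.bot ∧ g x = Tri.one}
          = μ {x | f x ≠ Tri.bot} * μ {x | g x = Tri.one} ∧
        μ {x | f x ≠ Tri.bot ∧ g x ≠ Tri.bot}
          = μ {x | f x ≠ Tri.bot} * μ {x | g x ≠ Tri.bot}) := by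
  constructor
  · intro h9
    have Esn : ∀ s : Tri, μ {x | f x = s ∧ g x ≠ Tri.bot}
        = μ {x | f x = s} * μ {x | g x ≠ Tri.bot} := by
      intro s
      have hA := split_zo' (μ := μ) hg (p := fun x => f x = s) (measPre hf {y | y = s})
      rw [h9 s Tri.zero, h9 s Tri.one, ← mul_add, marg_zo hg] at hA
      exact hA.symm
    refine ⟨h9 Tri.one Tri.one, Esn Tri.one, ?_, ?_⟩
    · have hA := split_zo (μ := μ) hf (p := fun x => g x = Tri.one)
        (measPre hg {y | y = Tri.one})
      rw [h9 Tri.zero Tri.one, h9 Tri.one Tri.one, ← add_mul, marg_zo hf] at hA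
      exact hA.symm
    · have hA := split_zo (μ := μ) hf (p := fun x => g x ≠ Tri.bot)
        (measPre hg {y | y ≠ Tri.bot})
      rw [Esn Tri.zero, Esn Tri.one, ← add_mul, marg_zo hf] at hA
      exact hA.symm
  · rintro ⟨E11, E1n, En1, Enn⟩
    obtain ⟨H01, Hb1⟩ := col_lemma hf (q := fun x => g x = Tri.one)
      (measPre hg {y | y = Tri.one}) E11 En1
    obtain ⟨H0n, Hbn⟩ := col_lemma hf (q := fun x => g x ≠ Tri.bot)
      (measPre hg {y | y ≠ Tri.bot}) E1n Enn
    obtain ⟨R10, R1b⟩ := row_lemma hg (p := fun x => f x = Tri.one)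
      (measPre hf {y | y = Tri.one}) E11 E1n
    obtain ⟨R00, R0b⟩ := row_lemma hg (p := fun x => f x = Tri.zero)
      (measPre hf {y | y = Tri.zero}) H01 H0n
    obtain ⟨Rb0, Rbb⟩ := row_lemma hg (p := fun x => f x = Tri.bot)
      (measPre hf {y | y = Tri.bot}) Hb1 Hbn
    intro s t
    cases s <;> cases t
    · exact R00
    · exact H01
    · exact R0b
    · exact R10
    · exact E11
    · exact R1b
    · exact Rb0
    · exact Hb1
    · exact Rbb

lemma E_iff_CondEq {f g : Ω → Tri} (hf : Measurable f) (hg : Measurable g) :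
    (μ {x | f x = Tri.one ∧ g x = Tri.one}
        = μ {x | f x = Tri.one} * μ {x | g x = Tri.one} ∧
      μ {x | f x = Tri.one ∧ g x ≠ Tri.bot}
        = μ {x | f x = Tri.one} * μ {x | g x ≠ Tri.bot} ∧
      μ {x | f x ≠ Tri.bot ∧ g x = Tri.one}
        = μ {x | f x ≠ Tri.bot} * μ {x | g x = Tri.one} ∧
      μ {x | f x ≠ Tri.bot ∧ g x ≠ Tri.bot}
        = μ {x | f x ≠ Tri.bot} * μ {x | g x ≠ Tri.bot}) ↔
    (CondEq (μ {x | f x ≠ Tri.bot ∧ g x ≠ Tri.bot} ≠ 0)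
        (μ {x | f x ≠ Tri.bot} ≠ 0 ∧ μ {x | g x ≠ Tri.bot} ≠ 0)
        (μ {x | f x = Tri.one ∧ g x = Tri.one} /
          μ {x | f x ≠ Tri.bot ∧ g x ≠ Tri.bot})
        ((μ {x | f x = Tri.one} / μ {x | f x ≠ Tri.bot}) *
          (μ {x | g x = Tri.one} / μ {x | g x ≠ Tri.bot})) ∧
      CondEq (μ {x | f x ≠ Tri.bot} ≠ 0) (μ {x | f x ≠ Tri.bot} ≠ 0)
        (μ {x | f x = Tri.one ∧ g x ≠ Tri.bot} / μ {x | f x ≠ Tri.bot})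
        ((μ {x | f x = Tri.one} / μ {x | f x ≠ Tri.bot}) *
          μ {x | g x ≠ Tri.bot}) ∧
      CondEq (μ {x | g x ≠ Tri.bot} ≠ 0) (μ {x | g x ≠ Tri.bot} ≠ 0)
        (μ {x | f x ≠ Tri.bot ∧ g x = Tri.one} / μ {x | g x ≠ Tri.bot})
        (μ {x | f x ≠ Tri.bot} *
          (μ {x | g x = Tri.one} / μ {x | g x ≠ Tri.bot})) ∧
      μ {x | f x ≠ Tri.bot ∧ g x ≠ Tri.bot} =
        μ {x | f x ≠ Tri.bot} * μ {x | g x ≠ Tri.bot}) := by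
  have hone : (Tri.one : Tri) ≠ Tri.bot := by simp
  have sub1f : {x | f x = Tri.one} ⊆ {x | f x ≠ Tri.bot} := by
    intro x hx; simp only [Set.mem_setOf_eq] at *; rw [hx]; exact hone
  have sub1g : {x | g x = Tri.one} ⊆ {x | g x ≠ Tri.bot} := by
    intro x hx; simp only [Set.mem_setOf_eq] at *; rw [hx]; exact hone
  have sub1nf : {x | f x = Tri.one ∧ g x ≠ Tri.bot} ⊆ {x | f x ≠ Tri.bot} := by
    rintro x ⟨h1, -⟩; simp only [Set.mem_setOf_eq]; rw [h1]; exact hone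
  have subn1g : {x | f x ≠ Tri.bot ∧ g x = Tri.one} ⊆ {x | g x ≠ Tri.bot} := by
    rintro x ⟨-, h1⟩; simp only [Set.mem_setOf_eq]; rw [h1]; exact hone
  have sub11nn : {x | f x = Tri.one ∧ g x = Tri.one} ⊆
      {x | f x ≠ Tri.bot ∧ g x ≠ Tri.bot} := by
    rintro x ⟨h1, h2⟩; exact ⟨by rw [h1]; exact hone, by rw [h2]; exact hone⟩
  constructor
  · rintro ⟨E11, E1n, En1, Enn⟩
    refine ⟨?_, ?_, ?_, Enn⟩
    · by_cases h : μ {x | f x ≠ Tri.bot} ≠ 0 ∧ μ {x | g x ≠ Tri.bot} ≠ 0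
      · obtain ⟨ha, hb⟩ := h
        refine Or.inl ⟨by rw [Enn]; exact mul_ne_zero ha hb, ⟨ha, hb⟩, ?_⟩
        rw [E11, Enn]
        simp only [div_eq_mul_inv]
        rw [ENNReal.mul_inv (Or.inr (measure_ne_top _ _)) (Or.inl (measure_ne_top _ _))]
        ring
      · exact Or.inr ⟨by rw [Enn]; exact fun hne => h (mul_ne_zero_iff.mp hne), h⟩
    · by_cases ha : μ {x | f x ≠ Tri.bot} = 0
      · exact Or.inr ⟨not_not_intro ha, not_not_intro ha⟩
      · refine Or.inl ⟨ha, ha, ?_⟩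
        rw [E1n, div_eq_mul_inv, div_eq_mul_inv, mul_right_comm]
    · by_cases hb : μ {x | g x ≠ Tri.bot} = 0
      · exact Or.inr ⟨not_not_intro hb, not_not_intro hb⟩
      · refine Or.inl ⟨hb, hb, ?_⟩
        rw [En1, div_eq_mul_inv, div_eq_mul_inv, mul_assoc]
  · rintro ⟨C1, C2, C3, Enn⟩
    have E1n : μ {x | f x = Tri.one ∧ g x ≠ Tri.bot}
        = μ {x | f x = Tri.one} * μ {x | g x ≠ Tri.bot} := by
      rcases C2 with ⟨ha, -, heq⟩ | ⟨ha, -⟩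
      · have hx := ENNReal.div_mul_cancel ha (measure_ne_top μ _)
          (b := μ {x | f x = Tri.one ∧ g x ≠ Tri.bot})
        rw [heq] at hx
        rw [← hx, mul_right_comm, ENNReal.div_mul_cancel ha (measure_ne_top μ _)]
      · have ha0 : μ {x | f x ≠ Tri.bot} = 0 := not_not.mp ha
        have hx0 : μ {x | f x = Tri.one ∧ g x ≠ Tri.bot} = 0 :=
          measure_mono_null sub1nf ha0
        have ha10 : μ {x | f x = Tri.one} = 0 :=
          le_antisymm (ha0 ▸ measure_mono sub1f) zero_le
        rw [hx0, ha10, zero_mul]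
    have En1 : μ {x | f x ≠ Tri.bot ∧ g x = Tri.one}
        = μ {x | f x ≠ Tri.bot} * μ {x | g x = Tri.one} := by
      rcases C3 with ⟨hb, -, heq⟩ | ⟨hb, -⟩
      · have hx := ENNReal.div_mul_cancel hb (measure_ne_top μ _)
          (b := μ {x | f x ≠ Tri.bot ∧ g x = Tri.one})
        rw [heq] at hx
        rw [← hx, mul_assoc, ENNReal.div_mul_cancel hb (measure_ne_top μ _)]
      · have hb0 : μ {x | g x ≠ Tri.bot} = 0 := not_not.mp hb
        have hx0 : μ {x | f x ≠ Tri.bot ∧ g x = Tri.one} = 0 :=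
          measure_mono_null subn1g hb0
        have hb10 : μ {x | g x = Tri.one} = 0 :=
          le_antisymm (hb0 ▸ measure_mono sub1g) zero_le
        rw [hx0, hb10, mul_zero]
    have E11 : μ {x | f x = Tri.one ∧ g x = Tri.one}
        = μ {x | f x = Tri.one} * μ {x | g x = Tri.one} := by
      rcases C1 with ⟨hdl, ⟨ha, hb⟩, heq⟩ | ⟨hdl, hdr⟩
      · have hx := ENNReal.div_mul_cancel hdl (measure_ne_top μ _)
          (b := μ {x | f x = Tri.one ∧ g x = Tri.one})
        rw [heq] at hx
        rw [← hx, Enn]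
        simp only [div_eq_mul_inv]
        have e1 : μ {x | f x = Tri.one} * (μ {x | f x ≠ Tri.bot})⁻¹ *
            (μ {x | g x = Tri.one} * (μ {x | g x ≠ Tri.bot})⁻¹) *
            (μ {x | f x ≠ Tri.bot} * μ {x | g x ≠ Tri.bot})
            = (μ {x | f x ≠ Tri.bot} * (μ {x | f x ≠ Tri.bot})⁻¹) *
              ((μ {x | g x ≠ Tri.bot} * (μ {x | g x ≠ Tri.bot})⁻¹) *
              (μ {x | f x = Tri.one} * μ {x | g x = Tri.one})) := by ring
        rw [e1, ENNReal.mul_inv_cancel ha (measure_ne_top μ _),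
          ENNReal.mul_inv_cancel hb (measure_ne_top μ _), one_mul, one_mul]
      · have hnn0 : μ {x | f x ≠ Tri.bot ∧ g x ≠ Tri.bot} = 0 := not_not.mp hdl
        have hx0 : μ {x | f x = Tri.one ∧ g x = Tri.one} = 0 :=
          measure_mono_null sub11nn hnn0
        rw [hx0]
        rcases not_and_or.mp hdr with h | h
        · have : μ {x | f x = Tri.one} = 0 :=
            le_antisymm ((not_not.mp h) ▸ measure_mono sub1f) zero_le
          rw [this, zero_mul]
        · have : μ {x | g x = Tri.one} = 0 :=
            le_antisymm ((not_not.mp h) ▸ measure_mono sub1g) zero_le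
          rw [this, mul_zero]
    exact ⟨E11, E1n, En1, Enn⟩

end Aux

section ProdMeas

lemma prod_meas {Ω W : Type*} [MeasurableSpace Ω] [MeasurableSpace W]
    (μ : Measure Ω) (P : Measure W)
    (X : ℕ → W → Ω) (hXmeas : ∀ n, Measurable (X n))
    (hXindep : iIndepFun X P)
    (hXlaw : ∀ n, P.map (X n) = μ)
    (t : ℕ) (C : Fin t → Set Ω) (hC : ∀ i, MeasurableSet (C i)) :
    P {w | ∀ i : Fin t, X i w ∈ C i} = ∏ i, μ (C i) := by
  classical
  set D : ℕ → Set Ω := fun n => if h : n < t then C ⟨n, h⟩ else Set.univ with hD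
  have hDmeas : ∀ n, MeasurableSet (D n) := by
    intro n; by_cases h : n < t <;> simp [hD, h, hC]
  have hset : {w | ∀ i : Fin t, X i w ∈ C i} = ⋂ n ∈ Finset.range t, (X n) ⁻¹' (D n) := by
    ext w
    simp only [Set.mem_setOf_eq, Set.mem_iInter, Finset.mem_range, Set.mem_preimage]
    constructor
    · intro h n hn; simp [hD, hn, h ⟨n, hn⟩]
    · intro h i; have := h i i.isLt; simpa [hD, i.isLt] using this
  rw [hset, hXindep.meas_biInter (fun n _ => ⟨D n, hDmeas n, rfl⟩)]
  have hfac : ∀ n, P ((X n) ⁻¹' (D n)) = μ (D n) := fun n => by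
    rw [← hXlaw n, Measure.map_apply (hXmeas n) (hDmeas n)]
  simp_rw [hfac]
  rw [← Fin.prod_univ_eq_prod_range (fun n => μ (D n)) t]
  apply Finset.prod_congr rfl
  intro i _
  simp [hD, i.isLt]

end ProdMeas

/-- Let `(Xₙ)` be an i.i.d. sequence with law `μ` (the coordinate
process on the infinite product space) and `f g : Ω → 3` measurable. The stochastic
processes `(f (Xₙ))` and `(g (Xₙ))` are independent iff the four equalities of
asymptotic probabilities hold:
(1) `μ(f=1 ∧ g=1)/μ(f≠⊥ ∧ g≠⊥) = (μ(f=1)/μ(f≠⊥))·(μ(g=1)/μ(g≠⊥))`,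
(2) `μ(f=1 ∧ g≠⊥)/μ(f≠⊥) = (μ(f=1)/μ(f≠⊥))·μ(g≠⊥)`,
(3) `μ(f≠⊥ ∧ g=1)/μ(g≠⊥) = μ(f≠⊥)·(μ(g=1)/μ(g≠⊥))`,
(4) `μ(f≠⊥ ∧ g≠⊥) = μ(f≠⊥)·μ(g≠⊥)`,
each equality understood to hold also when both of its sides are undefined
(involve division by zero) and to fail when exactly one side is. -/
theorem present_tense_indep_iff_four_equalities
    {Ω W : Type*} [MeasurableSpace Ω] [MeasurableSpace W]
    (μ : Measure Ω) [IsProbabilityMeasure μ]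
    (P : Measure W) [IsProbabilityMeasure P]
    (X : ℕ → W → Ω) (hXmeas : ∀ n, Measurable (X n))
    (hXindep : iIndepFun X P)
    (hXlaw : ∀ n, P.map (X n) = μ)
    (f g : Ω → Tri) (hf : Measurable f) (hg : Measurable g) :
    (∀ t : ℕ, 1 ≤ t → ∀ wv vv : Fin t → Tri,
        P {w | (∀ i : Fin t, f (X i w) = wv i) ∧ (∀ i : Fin t, g (X i w) = vv i)} =
          P {w | ∀ i : Fin t, f (X i w) = wv i} *
            P {w | ∀ i : Fin t, g (X i w) = vv i}) ↔
      (CondEq (μ {x | f x ≠ Tri.bot ∧ g x ≠ Tri.bot} ≠ 0)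
          (μ {x | f x ≠ Tri.bot} ≠ 0 ∧ μ {x | g x ≠ Tri.bot} ≠ 0)
          (μ {x | f x = Tri.one ∧ g x = Tri.one} /
            μ {x | f x ≠ Tri.bot ∧ g x ≠ Tri.bot})
          ((μ {x | f x = Tri.one} / μ {x | f x ≠ Tri.bot}) *
            (μ {x | g x = Tri.one} / μ {x | g x ≠ Tri.bot})) ∧
        CondEq (μ {x | f x ≠ Tri.bot} ≠ 0) (μ {x | f x ≠ Tri.bot} ≠ 0)
          (μ {x | f x = Tri.one ∧ g x ≠ Tri.bot} / μ {x | f x ≠ Tri.bot})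
          ((μ {x | f x = Tri.one} / μ {x | f x ≠ Tri.bot}) *
            μ {x | g x ≠ Tri.bot}) ∧
        CondEq (μ {x | g x ≠ Tri.bot} ≠ 0) (μ {x | g x ≠ Tri.bot} ≠ 0)
          (μ {x | f x ≠ Tri.bot ∧ g x = Tri.one} / μ {x | g x ≠ Tri.bot})
          (μ {x | f x ≠ Tri.bot} *
            (μ {x | g x = Tri.one} / μ {x | g x ≠ Tri.bot})) ∧
        μ {x | f x ≠ Tri.bot ∧ g x ≠ Tri.bot} =
          μ {x | f x ≠ Tri.bot} * μ {x | g x ≠ Tri.bot}) := by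
  have hsets : ∀ (t : ℕ) (wv vv : Fin t → Tri),
      P {w | (∀ i : Fin t, f (X i w) = wv i) ∧ (∀ i : Fin t, g (X i w) = vv i)}
        = ∏ i, μ {x | f x = wv i ∧ g x = vv i} ∧
      P {w | ∀ i : Fin t, f (X i w) = wv i} = ∏ i, μ {x | f x = wv i} ∧
      P {w | ∀ i : Fin t, g (X i w) = vv i} = ∏ i, μ {x | g x = vv i} := by
    intro t wv vv
    refine ⟨?_, ?_, ?_⟩
    · have hset : {w | (∀ i : Fin t, f (X i w) = wv i) ∧ (∀ i : Fin t, g (X i w) = vv i)}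
          = {w | ∀ i : Fin t, X i w ∈ {x | f x = wv i ∧ g x = vv i}} := by
        ext w
        simp only [Set.mem_setOf_eq]
        exact forall_and.symm
      rw [hset]
      exact prod_meas μ P X hXmeas hXindep hXlaw t _
        (fun i => (measPre hf {y | y = wv i}).inter (measPre hg {y | y = vv i}))
    · exact prod_meas μ P X hXmeas hXindep hXlaw t (fun i => {x | f x = wv i})
        (fun i => measPre hf {y | y = wv i})
    · exact prod_meas μ P X hXmeas hXindep hXlaw t (fun i => {x | g x = vv i})
        (fun i => measPre hg {y | y = vv i})
  have hproc : (∀ t : ℕ, 1 ≤ t → ∀ wv vv : Fin t → Tri,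
      P {w | (∀ i : Fin t, f (X i w) = wv i) ∧ (∀ i : Fin t, g (X i w) = vv i)} =
        P {w | ∀ i : Fin t, f (X i w) = wv i} *
          P {w | ∀ i : Fin t, g (X i w) = vv i}) ↔
      (∀ s t : Tri, μ {x | f x = s ∧ g x = t} = μ {x | f x = s} * μ {x | g x = t}) := by
    constructor
    · intro H s t
      have h1 := H 1 le_rfl (fun _ => s) (fun _ => t)
      obtain ⟨eA, eB, eC⟩ := hsets 1 (fun _ => s) (fun _ => t)
      rw [eA, eB, eC] at h1
      simpa using h1
    · intro h9 t ht wv vv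
      obtain ⟨eA, eB, eC⟩ := hsets t wv vv
      rw [eA, eB, eC, ← Finset.prod_mul_distrib]
      exact Finset.prod_congr rfl (fun i _ => h9 (wv i) (vv i))
  rw [hproc, nine_iff_E hf hg, E_iff_CondEq hf hg]
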